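/- Suppose each honest replica votes for at most one node per height, and a QC for a node requires 2f+1 votes. Then two conflicting nodes b and w with height(b) = height(w) cannot both have valid quorum certificates. -/
import Mathlib

/-- Lemma (incumbent-basic): if honest replicas vote at most once per height,
two conflicting (distinct) nodes at the same height cannot both have valid QCs. -/
theorem no_two_qcs_same_height {Node : Type} (f : ℕ) (B : Finset (Fin (3 * f + 1)))
    (hB : B.card ≤ f)
    (height : Node → ℕ)
    (voted : Fin (3 * f + 1) → Node → Prop)
    (honest_once : ∀ r, r ∉ B → ∀ b b', voted r b → voted r b' →
      height b = height b' → b = b')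
    (b w : Node) (hconf : b ≠ w) (hh : height b = height w)
    (Qb Qw : Finset (Fin (3 * f + 1)))
    (hQbcard : 2 * f + 1 ≤ Qb.card) (hQbvote : ∀ r ∈ Qb, voted r b)
    (hQwcard : 2 * f + 1 ≤ Qw.card) (hQwvote : ∀ r ∈ Qw, voted r w) :
    False := by
  have hunion : (Qb ∪ Qw).card ≤ 3 * f + 1 := by
    simpa using (Qb ∪ Qw).card_le_univ
  have hinter : f + 1 ≤ (Qb ∩ Qw).card := by
    have := Finset.card_union_add_card_inter Qb Qw
    omega
  have hsub : ¬ (Qb ∩ Qw ⊆ B) := fun h => by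
    have := Finset.card_le_card h; omega
  obtain ⟨r, hrQ, hrB⟩ := Finset.not_subset.mp hsub
  rw [Finset.mem_inter] at hrQ
  exact hconf (honest_once r hrB b w (hQbvote r hrQ.1) (hQwvote r hrQ.2) hh)
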